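/- arXiv:1711.09734 — 3 statements merged into one kernel-verified Lean document; each statement's English description precedes it below -/
import Mathlib

section
/- Let n ≥ 2 and k ≥ 3 with k ≤ n, and let ρ(x) = sqrt(x₁² + ⋯ + x_k² + ε(x_{k+1}² + ⋯ + x_n²)) on ℝⁿ \ {0}. Then for every ε ∈ [0,1], the bilaplacian satisfies Δ²ρ(x) ≤ 0 for all x ≠ 0. -/
open scoped BigOperators

noncomputable def lap {n : ℕ} (f : EuclideanSpace ℝ (Fin n) → ℝ)
    (x : EuclideanSpace ℝ (Fin n)) : ℝ :=
  ∑ i : Fin n, fderiv ℝ (fun y => fderiv ℝ f y (EuclideanSpace.single i 1)) x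
    (EuclideanSpace.single i 1)

section Bilap

variable {n : ℕ}

local notation "E" => EuclideanSpace ℝ (Fin n)

lemma hasFDerivAt_Sw (c : Fin n → ℝ) (y : E) :
    HasFDerivAt (fun z : E => ∑ i, c i * z i ^ 2)
      (∑ i, (2 * c i * y i) • (EuclideanSpace.proj i : E →L[ℝ] ℝ)) y := by
  have h : ∀ i : Fin n, HasFDerivAt (fun z : E => c i * z i ^ 2)
      ((2 * c i * y i) • (EuclideanSpace.proj i : E →L[ℝ] ℝ)) y := by
    intro i
    have hp : HasFDerivAt (fun z : E => z i) (EuclideanSpace.proj i : E →L[ℝ] ℝ) y :=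
      (EuclideanSpace.proj i : E →L[ℝ] ℝ).hasFDerivAt
    have h2 := (hp.mul hp).const_mul (c i)
    simp only [pow_two]
    refine h2.congr_fderiv ?_
    ext v
    simp [smul_smul]
    ring
  exact HasFDerivAt.fun_sum (fun i _ => h i)

lemma Lw_apply (c : Fin n → ℝ) (y : E) (j : Fin n) :
    (∑ i, (2 * c i * y i) • (EuclideanSpace.proj i : E →L[ℝ] ℝ)) (EuclideanSpace.single j 1)
      = 2 * c j * y j := by
  simp [ContinuousLinearMap.sum_apply, EuclideanSpace.single_apply]

lemma continuous_Sw (c : Fin n → ℝ) : Continuous (fun z : E => ∑ i, c i * z i ^ 2) :=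
  continuous_finset_sum _ fun i _ => by
    exact (continuous_const.mul (((EuclideanSpace.proj i : E →L[ℝ] ℝ).continuous).pow 2))

lemma hasFDerivAt_Sw_rpow (c : Fin n → ℝ) (y : E) (p : ℝ)
    (hy : (∑ i, c i * y i ^ 2) ≠ 0) :
    HasFDerivAt (fun z : E => (∑ i, c i * z i ^ 2) ^ p)
      ((p * (∑ i, c i * y i ^ 2) ^ (p - 1)) •
        (∑ i, (2 * c i * y i) • (EuclideanSpace.proj i : E →L[ℝ] ℝ))) y :=
  by have := (Real.hasDerivAt_rpow_const (p := p) (Or.inl hy)).comp_hasFDerivAt y (hasFDerivAt_Sw c y); exact this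

lemma hasFDerivAt_sqrt_Sw (c : Fin n → ℝ) (y : E)
    (hy : (∑ i, c i * y i ^ 2) ≠ 0) :
    HasFDerivAt (fun z : E => Real.sqrt (∑ i, c i * z i ^ 2))
      ((1 / (2 * Real.sqrt (∑ i, c i * y i ^ 2))) •
        (∑ i, (2 * c i * y i) • (EuclideanSpace.proj i : E →L[ℝ] ℝ))) y :=
  (Real.hasDerivAt_sqrt hy).comp_hasFDerivAt y (hasFDerivAt_Sw c y)


lemma fderiv_sqrt_Sw_apply (c : Fin n → ℝ) (i : Fin n) (y : E)
    (hy : 0 < ∑ j, c j * y j ^ 2) :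
    fderiv ℝ (fun z : E => Real.sqrt (∑ j, c j * z j ^ 2)) y (EuclideanSpace.single i 1)
      = c i * y i * (∑ j, c j * y j ^ 2) ^ (-(1:ℝ)/2) := by
  rw [(hasFDerivAt_sqrt_Sw c y hy.ne').fderiv, ContinuousLinearMap.smul_apply, Lw_apply]
  have hs : 0 < Real.sqrt (∑ j, c j * y j ^ 2) := Real.sqrt_pos.2 hy
  rw [show (-(1:ℝ)/2) = -(1/2) by norm_num, Real.rpow_neg hy.le, ← Real.sqrt_eq_rpow]
  field_simp
  rw [smul_eq_mul]
  field_simp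

lemma lap_sqrt_eq (c : Fin n → ℝ) (y : E) (hy : 0 < ∑ i, c i * y i ^ 2) :
    lap (fun z : E => Real.sqrt (∑ j, c j * z j ^ 2)) y
    = (∑ i, c i) * (∑ i, c i * y i ^ 2) ^ (-(1:ℝ)/2)
      - (∑ i, (c i)^2 * y i ^ 2) * (∑ i, c i * y i ^ 2) ^ (-(3:ℝ)/2) := by
  have hopen : IsOpen {z : E | 0 < ∑ i, c i * z i ^ 2} :=
    isOpen_lt continuous_const (continuous_Sw c)
  unfold lap
  have hterm : ∀ i : Fin n,
      fderiv ℝ (fun z : E => fderiv ℝ (fun w : E => Real.sqrt (∑ j, c j * w j ^ 2)) z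
        (EuclideanSpace.single i 1)) y (EuclideanSpace.single i 1)
      = c i * (∑ j, c j * y j ^ 2) ^ (-(1:ℝ)/2)
        - (c i)^2 * y i ^ 2 * (∑ j, c j * y j ^ 2) ^ (-(3:ℝ)/2) := by
    intro i
    have hev : (fun z : E => fderiv ℝ (fun w : E => Real.sqrt (∑ j, c j * w j ^ 2)) z
        (EuclideanSpace.single i 1))
        =ᶠ[nhds y] (fun z : E => c i * z i * (∑ j, c j * z j ^ 2) ^ (-(1:ℝ)/2)) :=
      Filter.eventuallyEq_of_mem (hopen.mem_nhds hy)
        (fun z hz => fderiv_sqrt_Sw_apply c i z hz)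
    rw [hev.fderiv_eq]
    have hg : HasFDerivAt (fun z : E => c i * z i * (∑ j, c j * z j ^ 2) ^ (-(1:ℝ)/2))
        ((c i * y i) • ((-(1:ℝ)/2 * (∑ j, c j * y j ^ 2) ^ (-(1:ℝ)/2 - 1)) •
            (∑ j, (2 * c j * y j) • (EuclideanSpace.proj j : E →L[ℝ] ℝ)))
          + ((∑ j, c j * y j ^ 2) ^ (-(1:ℝ)/2)) •
            ((c i) • (EuclideanSpace.proj i : E →L[ℝ] ℝ))) y :=
      HasFDerivAt.mul ((EuclideanSpace.proj i : E →L[ℝ] ℝ).hasFDerivAt.const_mul (c i))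
        (hasFDerivAt_Sw_rpow c y (-(1:ℝ)/2) hy.ne')
    rw [hg.fderiv]
    rw [ContinuousLinearMap.add_apply, ContinuousLinearMap.smul_apply,
      ContinuousLinearMap.smul_apply, Lw_apply]
    simp only [ContinuousLinearMap.smul_apply, PiLp.proj_apply,
      EuclideanSpace.single_apply, smul_eq_mul, if_pos rfl]
    rw [show (-(1:ℝ)/2 - 1) = (-(3:ℝ)/2) by norm_num]
    simp
    ring
  rw [Finset.sum_congr rfl (fun i _ => hterm i), Finset.sum_sub_distrib,
    ← Finset.sum_mul, ← Finset.sum_mul]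


lemma fderiv_lap_sqrt_apply (c : Fin n → ℝ) (y : E) (hy : 0 < ∑ i, c i * y i ^ 2)
    (i : Fin n) :
    fderiv ℝ (lap (fun z : E => Real.sqrt (∑ j, c j * z j ^ 2))) y (EuclideanSpace.single i 1)
      = (-(∑ j, c j) * c i - 2 * (c i)^2) * y i * (∑ j, c j * y j ^ 2) ^ (-(3:ℝ)/2)
        + 3 * (∑ j, (c j)^2 * y j ^ 2) * (c i * y i) * (∑ j, c j * y j ^ 2) ^ (-(5:ℝ)/2) := by
  have hopen : IsOpen {z : E | 0 < ∑ i, c i * z i ^ 2} :=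
    isOpen_lt continuous_const (continuous_Sw c)
  have hev : (lap (fun z : E => Real.sqrt (∑ j, c j * z j ^ 2)))
      =ᶠ[nhds y] (fun z : E => (∑ j, c j) * (∑ j, c j * z j ^ 2) ^ (-(1:ℝ)/2)
        - (∑ j, (c j)^2 * z j ^ 2) * (∑ j, c j * z j ^ 2) ^ (-(3:ℝ)/2)) :=
    Filter.eventuallyEq_of_mem (hopen.mem_nhds hy) (fun z hz => lap_sqrt_eq c z hz)
  rw [hev.fderiv_eq]
  have hA : HasFDerivAt (fun z : E => (∑ j, c j) * (∑ j, c j * z j ^ 2) ^ (-(1:ℝ)/2))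
      ((∑ j, c j) • ((-(1:ℝ)/2 * (∑ j, c j * y j ^ 2) ^ (-(1:ℝ)/2 - 1)) •
        (∑ j, (2 * c j * y j) • (EuclideanSpace.proj j : E →L[ℝ] ℝ)))) y :=
    (hasFDerivAt_Sw_rpow c y (-(1:ℝ)/2) hy.ne').const_mul _
  have hB : HasFDerivAt (fun z : E => (∑ j, (c j)^2 * z j ^ 2) * (∑ j, c j * z j ^ 2) ^ (-(3:ℝ)/2))
      ((∑ j, (c j)^2 * y j ^ 2) • ((-(3:ℝ)/2 * (∑ j, c j * y j ^ 2) ^ (-(3:ℝ)/2 - 1)) •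
        (∑ j, (2 * c j * y j) • (EuclideanSpace.proj j : E →L[ℝ] ℝ)))
        + ((∑ j, c j * y j ^ 2) ^ (-(3:ℝ)/2)) •
          (∑ j, (2 * (c j)^2 * y j) • (EuclideanSpace.proj j : E →L[ℝ] ℝ))) y :=
    HasFDerivAt.mul (hasFDerivAt_Sw (fun j => (c j)^2) y)
      (hasFDerivAt_Sw_rpow c y (-(3:ℝ)/2) hy.ne')
  rw [(hA.fun_sub hB).fderiv]
  simp only [ContinuousLinearMap.add_apply, ContinuousLinearMap.sub_apply,
    ContinuousLinearMap.smul_apply, ContinuousLinearMap.sum_apply, PiLp.proj_apply,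
    EuclideanSpace.single_apply, smul_eq_mul, mul_ite, mul_one, mul_zero,
    Finset.sum_ite_eq', Finset.mem_univ, if_true]
  rw [show (-(1:ℝ)/2 - 1) = (-(3:ℝ)/2) by norm_num,
    show (-(3:ℝ)/2 - 1) = (-(5:ℝ)/2) by norm_num]
  ring

lemma lap_lap_sqrt_eq (c : Fin n → ℝ) (x : E) (hx : 0 < ∑ i, c i * x i ^ 2) :
    lap (lap (fun z : E => Real.sqrt (∑ j, c j * z j ^ 2))) x
    = (-(∑ i, c i)^2 - 2 * (∑ i, (c i)^2)) * (∑ i, c i * x i ^ 2) ^ (-(3:ℝ)/2)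
      + (6 * (∑ i, c i) * (∑ i, (c i)^2 * x i ^ 2) + 12 * (∑ i, (c i)^3 * x i ^ 2))
          * (∑ i, c i * x i ^ 2) ^ (-(5:ℝ)/2)
      - 15 * (∑ i, (c i)^2 * x i ^ 2)^2 * (∑ i, c i * x i ^ 2) ^ (-(7:ℝ)/2) := by
  have hopen : IsOpen {z : E | 0 < ∑ i, c i * z i ^ 2} :=
    isOpen_lt continuous_const (continuous_Sw c)
  have hterm : ∀ i : Fin n,
      fderiv ℝ (fun y : E => fderiv ℝ (lap (fun z : E => Real.sqrt (∑ j, c j * z j ^ 2))) y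
        (EuclideanSpace.single i 1)) x (EuclideanSpace.single i 1)
      = (-(∑ j, c j) * (∑ j, c j * x j ^ 2) ^ (-(3:ℝ)/2)
          + 3 * (∑ j, (c j)^2 * x j ^ 2) * (∑ j, c j * x j ^ 2) ^ (-(5:ℝ)/2)) * c i
        + (-2 * (∑ j, c j * x j ^ 2) ^ (-(3:ℝ)/2)) * (c i)^2
        + (3 * (∑ j, c j) * (∑ j, c j * x j ^ 2) ^ (-(5:ℝ)/2)
            - 15 * (∑ j, (c j)^2 * x j ^ 2) * (∑ j, c j * x j ^ 2) ^ (-(7:ℝ)/2))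
            * ((c i)^2 * x i ^ 2)
        + (12 * (∑ j, c j * x j ^ 2) ^ (-(5:ℝ)/2)) * ((c i)^3 * x i ^ 2) := by
    intro i
    have hev : (fun y : E => fderiv ℝ (lap (fun z : E => Real.sqrt (∑ j, c j * z j ^ 2))) y
        (EuclideanSpace.single i 1))
        =ᶠ[nhds x] (fun y : E =>
          (-(∑ j, c j) * c i - 2 * (c i)^2) * y i * (∑ j, c j * y j ^ 2) ^ (-(3:ℝ)/2)
          + 3 * (∑ j, (c j)^2 * y j ^ 2) * (c i * y i) * (∑ j, c j * y j ^ 2) ^ (-(5:ℝ)/2)) :=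
      Filter.eventuallyEq_of_mem (hopen.mem_nhds hx)
        (fun z hz => fderiv_lap_sqrt_apply c z hz i)
    rw [hev.fderiv_eq]
    have hu1 : HasFDerivAt (fun y : E =>
        (-(∑ j, c j) * c i - 2 * (c i)^2) * y i * (∑ j, c j * y j ^ 2) ^ (-(3:ℝ)/2))
        (((-(∑ j, c j) * c i - 2 * (c i)^2) * x i) •
            ((-(3:ℝ)/2 * (∑ j, c j * x j ^ 2) ^ (-(3:ℝ)/2 - 1)) •
              (∑ j, (2 * c j * x j) • (EuclideanSpace.proj j : E →L[ℝ] ℝ)))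
          + ((∑ j, c j * x j ^ 2) ^ (-(3:ℝ)/2)) •
            ((-(∑ j, c j) * c i - 2 * (c i)^2) • (EuclideanSpace.proj i : E →L[ℝ] ℝ))) x :=
      HasFDerivAt.mul
        ((EuclideanSpace.proj i : E →L[ℝ] ℝ).hasFDerivAt.const_mul _)
        (hasFDerivAt_Sw_rpow c x (-(3:ℝ)/2) hx.ne')
    have hq : HasFDerivAt (fun y : E => 3 * (∑ j, (c j)^2 * y j ^ 2))
        ((3:ℝ) • (∑ j, (2 * (c j)^2 * x j) • (EuclideanSpace.proj j : E →L[ℝ] ℝ))) x :=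
      (hasFDerivAt_Sw (fun j => (c j)^2) x).const_mul 3
    have hzi : HasFDerivAt (fun y : E => c i * y i)
        ((c i) • (EuclideanSpace.proj i : E →L[ℝ] ℝ)) x :=
      (EuclideanSpace.proj i : E →L[ℝ] ℝ).hasFDerivAt.const_mul _
    have hu2 := (hq.fun_mul hzi).fun_mul (hasFDerivAt_Sw_rpow c x (-(5:ℝ)/2) hx.ne')
    rw [(hu1.fun_add hu2).fderiv]
    simp only [ContinuousLinearMap.add_apply, ContinuousLinearMap.sub_apply,
      ContinuousLinearMap.smul_apply, ContinuousLinearMap.sum_apply, PiLp.proj_apply,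
      EuclideanSpace.single_apply, smul_eq_mul, mul_ite, mul_one, mul_zero,
      Finset.sum_ite_eq', Finset.mem_univ, if_true]
    rw [show (-(3:ℝ)/2 - 1) = (-(5:ℝ)/2) by norm_num,
      show (-(5:ℝ)/2 - 1) = (-(7:ℝ)/2) by norm_num]
    ring
  conv_lhs => rw [lap]
  rw [Finset.sum_congr rfl (fun i _ => hterm i)]
  rw [Finset.sum_add_distrib, Finset.sum_add_distrib, Finset.sum_add_distrib,
    ← Finset.mul_sum, ← Finset.mul_sum, ← Finset.mul_sum, ← Finset.mul_sum]
  ring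


lemma sq_rpow (t : ℝ) (ht : 0 < t) (p : ℝ) : ((t^2 : ℝ)) ^ p = t ^ (2*p) := by
  rw [← Real.rpow_natCast t 2, ← Real.rpow_mul ht.le]
  norm_num

lemma tendsto_line (y v : E) :
    Filter.Tendsto (fun m : ℕ => y + (1/(m+1:ℝ)) • v) Filter.atTop (nhds y) := by
  have h1 := tendsto_one_div_add_atTop_nhds_zero_nat (𝕜 := ℝ)
  have h2 := (h1.smul_const v).const_add y
  simpa using h2

lemma S_line (c : Fin n → ℝ) (y : E) (i0 : Fin n) (hci : c i0 = 1)
    (hzero : ∀ i, c i * y i ^ 2 = 0) (t : ℝ) :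
    ∑ i, c i * ((y + t • EuclideanSpace.single i0 (1:ℝ)) i) ^ 2 = t ^ 2 := by
  have hy0 : y i0 = 0 := by
    have h := hzero i0
    rw [hci, one_mul] at h
    exact pow_eq_zero_iff (two_ne_zero) |>.1 h
  have hcong : ∀ i : Fin n, i ∈ Finset.univ →
      c i * ((y + t • EuclideanSpace.single i0 (1:ℝ)) i) ^ 2
        = if i = i0 then t ^ 2 else 0 := by
    intro i _
    rw [PiLp.add_apply, PiLp.smul_apply, EuclideanSpace.single_apply, smul_eq_mul]
    by_cases h : i = i0
    · subst h
      rw [if_pos rfl, if_pos rfl, hci, hy0]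
      ring
    · rw [if_neg h, if_neg h, mul_zero, add_zero]
      exact hzero i
  rw [Finset.sum_congr rfl hcong, Finset.sum_ite_eq', if_pos (Finset.mem_univ i0)]

lemma line_pos_S (c : Fin n → ℝ) (y : E) (i0 : Fin n) (hci : c i0 = 1)
    (hzero : ∀ i, c i * y i ^ 2 = 0) (t : ℝ) (ht : 0 < t) :
    0 < ∑ i, c i * ((y + t • EuclideanSpace.single i0 (1:ℝ)) i) ^ 2 := by
  rw [S_line c y i0 hci hzero t]
  positivity

lemma not_diffAt_sqrt_Sw (c : Fin n → ℝ) (i0 : Fin n) (hci : c i0 = 1) (y : E)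
    (hzero : ∀ i, c i * y i ^ 2 = 0) :
    ¬ DifferentiableAt ℝ (fun z : E => Real.sqrt (∑ j, c j * z j ^ 2)) y := by
  intro hdiff
  have hline : HasDerivAt (fun t : ℝ => y + t • EuclideanSpace.single i0 (1:ℝ))
      (EuclideanSpace.single i0 (1:ℝ)) 0 := by
    have := ((hasDerivAt_id (0:ℝ)).smul_const (EuclideanSpace.single i0 (1:ℝ))).const_add y
    simpa using this
  have hdiff' : DifferentiableAt ℝ
      (fun t : ℝ => Real.sqrt (∑ j, c j * ((y + t • EuclideanSpace.single i0 (1:ℝ)) j) ^ 2)) 0 := by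
    have h0 : y + (0:ℝ) • EuclideanSpace.single i0 (1:ℝ) = y := by simp
    exact DifferentiableAt.comp (g := fun z : E => Real.sqrt (∑ j, c j * z j ^ 2))
      (f := fun t : ℝ => y + t • EuclideanSpace.single i0 (1:ℝ)) 0
      (by rw [h0]; exact hdiff)
      hline.differentiableAt
  have habs : (fun t : ℝ => Real.sqrt (∑ j, c j * ((y + t • EuclideanSpace.single i0 (1:ℝ)) j) ^ 2))
      = fun t : ℝ => |t| := by
    funext t
    rw [S_line c y i0 hci hzero t, Real.sqrt_sq_eq_abs]
  rw [habs] at hdiff'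
  exact not_differentiableAt_abs_zero hdiff'


lemma caseB (c : Fin n → ℝ) (i0 : Fin n) (hci0 : c i0 = 1)
    (hc01 : ∀ i, c i = 0 ∨ c i = 1) (hT : 3 ≤ ∑ i, c i)
    (x : E) (hSx : ∑ i, c i * x i ^ 2 = 0) :
    lap (lap (fun z : E => Real.sqrt (∑ j, c j * z j ^ 2))) x = 0 := by
  have hcnn : ∀ i, 0 ≤ c i := fun i => by rcases hc01 i with h|h <;> simp [h]
  have htermnn : ∀ (y : E) (i : Fin n), 0 ≤ c i * y i ^ 2 :=
    fun y i => mul_nonneg (hcnn i) (sq_nonneg _)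
  have hSnn : ∀ y : E, 0 ≤ ∑ i, c i * y i ^ 2 :=
    fun y => Finset.sum_nonneg (fun i _ => htermnn y i)
  have hzero : ∀ y : E, (∑ i, c i * y i ^ 2) = 0 → ∀ i, c i * y i ^ 2 = 0 :=
    fun y hy i => (Finset.sum_eq_zero_iff_of_nonneg (fun i _ => htermnn y i)).1 hy i
      (Finset.mem_univ i)
  have hyi0 : ∀ (y : E) (i : Fin n), c i = 1 → (∑ j, c j * y j ^ 2) = 0 → y i = 0 := by
    intro y i h1 hy
    have h := hzero y hy i
    rw [h1, one_mul] at h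
    exact pow_eq_zero_iff (two_ne_zero) |>.1 h
  have hc2 : ∀ z : E, (∑ i, (c i)^2 * z i ^ 2) = ∑ i, c i * z i ^ 2 :=
    fun z => Finset.sum_congr rfl (fun i _ => by rcases hc01 i with h|h <;> rw [h] <;> ring)
  have hfd0 : ∀ y : E, (∑ i, c i * y i ^ 2) = 0 →
      fderiv ℝ (fun z : E => Real.sqrt (∑ j, c j * z j ^ 2)) y = 0 :=
    fun y hy => fderiv_zero_of_not_differentiableAt
      (not_diffAt_sqrt_Sw c i0 hci0 y (hzero y hy))
  -- lap f vanishes on the degenerate set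
  have hlap0 : ∀ y : E, (∑ i, c i * y i ^ 2) = 0 →
      lap (fun z : E => Real.sqrt (∑ j, c j * z j ^ 2)) y = 0 := by
    intro y hy
    rw [lap]
    apply Finset.sum_eq_zero
    intro i _
    rcases hc01 i with h0|h1
    · have hGi : (fun z : E => fderiv ℝ (fun w : E => Real.sqrt (∑ j, c j * w j ^ 2)) z
          (EuclideanSpace.single i 1)) = fun _ => (0:ℝ) := by
        funext z
        rcases (hSnn z).eq_or_lt with hz|hz
        · rw [hfd0 z hz.symm]
          simp
        · rw [fderiv_sqrt_Sw_apply c i z hz, h0]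
          ring
      rw [hGi]
      simp
    · have hnd : ¬ DifferentiableAt ℝ (fun z : E =>
          fderiv ℝ (fun w : E => Real.sqrt (∑ j, c j * w j ^ 2)) z
            (EuclideanSpace.single i 1)) y := by
        intro hd
        have htd := hd.continuousAt.tendsto.comp (tendsto_line y (EuclideanSpace.single i 1))
        have hGy : fderiv ℝ (fun w : E => Real.sqrt (∑ j, c j * w j ^ 2)) y
            (EuclideanSpace.single i 1) = 0 := by
          rw [hfd0 y hy]; simp
        rw [hGy] at htd
        have hval : ∀ m : ℕ,
            (fun z : E => fderiv ℝ (fun w : E => Real.sqrt (∑ j, c j * w j ^ 2)) z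
              (EuclideanSpace.single i 1)) (y + (1/(m+1:ℝ)) • EuclideanSpace.single i 1)
            = 1 := by
          intro m
          have htpos : (0:ℝ) < 1/(m+1:ℝ) := by positivity
          have hSpos := line_pos_S c y i h1 (hzero y hy) _ htpos
          simp only
          rw [fderiv_sqrt_Sw_apply c i _ hSpos, S_line c y i h1 (hzero y hy),
            sq_rpow _ htpos, show (2*(-(1:ℝ)/2)) = -1 by norm_num, Real.rpow_neg_one]
          simp [PiLp.add_apply, PiLp.smul_apply, EuclideanSpace.single_apply,
            hyi0 y i h1 hy, h1]
          field_simp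
        rw [show ((fun z : E => fderiv ℝ (fun w : E => Real.sqrt (∑ j, c j * w j ^ 2)) z
            (EuclideanSpace.single i 1)) ∘ (fun m : ℕ => y + (1/(m+1:ℝ)) •
              EuclideanSpace.single i 1)) = fun _ : ℕ => (1:ℝ) from funext hval] at htd
        have h01 := tendsto_nhds_unique htd tendsto_const_nhds
        norm_num at h01
      rw [fderiv_zero_of_not_differentiableAt hnd]
      simp
  -- fderiv of lap f vanishes on the degenerate set
  have hlapfd0 : ∀ y : E, (∑ i, c i * y i ^ 2) = 0 →
      fderiv ℝ (lap (fun z : E => Real.sqrt (∑ j, c j * z j ^ 2))) y = 0 := by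
    intro y hy
    apply fderiv_zero_of_not_differentiableAt
    intro hd
    have htd := hd.continuousAt.tendsto.comp (tendsto_line y (EuclideanSpace.single i0 1))
    rw [hlap0 y hy] at htd
    have hval : ∀ m : ℕ, 2 ≤ (lap (fun z : E => Real.sqrt (∑ j, c j * z j ^ 2)))
        (y + (1/(m+1:ℝ)) • EuclideanSpace.single i0 1) := by
      intro m
      have htpos : (0:ℝ) < 1/(m+1:ℝ) := by positivity
      have hSpos := line_pos_S c y i0 hci0 (hzero y hy) _ htpos
      rw [lap_sqrt_eq c _ hSpos, hc2, S_line c y i0 hci0 (hzero y hy),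
        sq_rpow _ htpos, sq_rpow _ htpos,
        show (2*(-(1:ℝ)/2)) = -1 by norm_num, show (2*(-(3:ℝ)/2)) = -3 by norm_num,
        Real.rpow_neg_one, show (-3:ℝ) = -((3:ℕ):ℝ) by norm_num,
        Real.rpow_neg htpos.le, Real.rpow_natCast]
      set t : ℝ := 1/(m+1:ℝ) with ht
      have hrw : (∑ i, c i) * t⁻¹ - t^2 * (t^3)⁻¹ = ((∑ i, c i) - 1) * t⁻¹ := by
        field_simp
      rw [hrw]
      have h1t : 1 ≤ t⁻¹ := by
        rw [ht]
        simp
      nlinarith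
    have hcontra := ge_of_tendsto' htd hval
    norm_num at hcontra
  -- conclude
  conv_lhs => rw [lap]
  apply Finset.sum_eq_zero
  intro i _
  rcases hc01 i with h0|h1
  · have hKi : (fun y : E => fderiv ℝ (lap (fun z : E => Real.sqrt (∑ j, c j * z j ^ 2))) y
        (EuclideanSpace.single i 1)) = fun _ => (0:ℝ) := by
      funext y
      rcases (hSnn y).eq_or_lt with hy|hy
      · rw [hlapfd0 y hy.symm]
        simp
      · rw [fderiv_lap_sqrt_apply c y hy i, h0]
        ring
    rw [hKi]
    simp
  · have hnd : ¬ DifferentiableAt ℝ (fun y : E =>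
        fderiv ℝ (lap (fun z : E => Real.sqrt (∑ j, c j * z j ^ 2))) y
          (EuclideanSpace.single i 1)) x := by
      intro hd
      have htd := hd.continuousAt.tendsto.comp (tendsto_line x (EuclideanSpace.single i 1))
      have hKx : fderiv ℝ (lap (fun z : E => Real.sqrt (∑ j, c j * z j ^ 2))) x
          (EuclideanSpace.single i 1) = 0 := by
        rw [hlapfd0 x hSx]; simp
      rw [hKx] at htd
      have hval : ∀ m : ℕ,
          (fun y : E => fderiv ℝ (lap (fun z : E => Real.sqrt (∑ j, c j * z j ^ 2))) y
            (EuclideanSpace.single i 1)) (x + (1/(m+1:ℝ)) • EuclideanSpace.single i 1)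
          ≤ -2 := by
        intro m
        have htpos : (0:ℝ) < 1/(m+1:ℝ) := by positivity
        have hSpos := line_pos_S c x i h1 (hzero x hSx) _ htpos
        simp only
        rw [fderiv_lap_sqrt_apply c _ hSpos i, hc2, S_line c x i h1 (hzero x hSx),
          sq_rpow _ htpos, sq_rpow _ htpos,
          show (2*(-(3:ℝ)/2)) = -3 by norm_num, show (2*(-(5:ℝ)/2)) = -5 by norm_num,
          show (-3:ℝ) = -((3:ℕ):ℝ) by norm_num, Real.rpow_neg htpos.le, Real.rpow_natCast]
        rw [show (-5:ℝ) = -((5:ℕ):ℝ) by norm_num, Real.rpow_neg htpos.le, Real.rpow_natCast]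
        have hxi : x i = 0 := hyi0 x i h1 hSx
        simp only [PiLp.add_apply, PiLp.smul_apply, EuclideanSpace.single_apply, smul_eq_mul,
          hxi, h1, eq_self_iff_true, if_true]
        set t : ℝ := 1/(m+1:ℝ) with ht
        have h1t : 1 ≤ t⁻¹ := by
          rw [ht]
          simp
        have htinv : 0 < t⁻¹ := by positivity
        have hrw2 : ((-(∑ j, c j)) * 1 - 2 * 1^2) * (0 + t * 1) * (t^3)⁻¹
            + 3 * (t^2) * (1 * (0 + t * 1)) * (t^5)⁻¹
            = (1 - (∑ j, c j)) * (t⁻¹)^2 := by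
          field_simp
          ring
        rw [hrw2]
        nlinarith [sq_nonneg t⁻¹]
      have hcontra := le_of_tendsto' htd hval
      norm_num at hcontra
    rw [fderiv_zero_of_not_differentiableAt hnd]
    simp


lemma key (u w ε K d : ℝ) (hu : 0 ≤ u) (hw : 0 ≤ w) (he0 : 0 ≤ ε) (he1 : ε ≤ 1)
    (hK : 3 ≤ K) (hd : 0 ≤ d) :
    0 ≤ ((K + d*ε)^2 + 2*(K + d*ε^2)) * (u + ε*w)^2
      - (6*(K + d*ε)*(u + ε^2*w) + 12*(u + ε^3*w)) * (u + ε*w)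
      + 15*(u + ε^2*w)^2 := by
  have hK3 : (0:ℝ) ≤ K - 3 := by linarith
  have hα : 0 ≤ (K-1)*(K-3) + 2*d*(K-3)*ε + d*(d+2)*ε^2 := by
    have := mul_nonneg (mul_nonneg hd hK3) he0
    nlinarith [mul_nonneg hd (sq_nonneg ε), sq_nonneg ε]
  have hβ : 0 ≤ 2*ε*((K-3)*(K+2+(2*d-3)*ε) + (d+2)*ε*(3 + (d-3)*ε)) := by
    have h1 : 0 ≤ K+2+(2*d-3)*ε := by nlinarith
    have h2 : 0 ≤ 3 + (d-3)*ε := by nlinarith [mul_nonneg hd he0]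
    have h3 : 0 ≤ (d+2)*ε := by nlinarith
    positivity
  have hγ : 0 ≤ ε^2 * (K^2 + 2*K + 2*K*(d-3)*ε + (d-1)*(d-3)*ε^2) := by
    have h1 : 0 ≤ (1-ε)*(K^2+2*K) + ε*(K+d-1)*(K+d-3) - (d-1)*(d-3)*(ε*(1-ε)) := by
      nlinarith [mul_nonneg (mul_nonneg he0 (sub_nonneg.2 he1)) hd,
        mul_nonneg he0 (sub_nonneg.2 he1), mul_nonneg hd hd,
        mul_nonneg (mul_nonneg (mul_nonneg he0 (sub_nonneg.2 he1)) hd) hd,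
        mul_nonneg (mul_nonneg (mul_nonneg he0 (sub_nonneg.2 he1)) hd) hK3]
    nlinarith [sq_nonneg ε]
  nlinarith [mul_nonneg hα (sq_nonneg u), mul_nonneg hβ (mul_nonneg hu hw),
    mul_nonneg hγ (sq_nonneg w)]

lemma caseA_aux (c : Fin n → ℝ) (x : E) (ε u w K d : ℝ)
    (hu : 0 ≤ u) (hw : 0 ≤ w) (he0 : 0 ≤ ε) (he1 : ε ≤ 1) (hK : 3 ≤ K) (hd : 0 ≤ d)
    (hT : (∑ i, c i) = K + d * ε)
    (hQ : (∑ i, (c i)^2) = K + d * ε^2)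
    (hS : (∑ i, c i * x i ^ 2) = u + ε * w)
    (hq : (∑ i, (c i)^2 * x i ^ 2) = u + ε^2 * w)
    (hm : (∑ i, (c i)^3 * x i ^ 2) = u + ε^3 * w)
    (hx : 0 < ∑ i, c i * x i ^ 2) :
    lap (lap (fun z : E => Real.sqrt (∑ j, c j * z j ^ 2))) x ≤ 0 := by
  rw [lap_lap_sqrt_eq c x hx, hT, hQ, hS, hq, hm]
  have hS' : 0 < u + ε * w := by rw [hS] at hx; exact hx
  have e1 : (u + ε * w) ^ (-(3:ℝ)/2) = (u + ε * w)^2 * (u + ε * w) ^ (-(7:ℝ)/2) := by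
    rw [← Real.rpow_natCast (u + ε * w) 2, ← Real.rpow_add hS']
    norm_num
  have e2 : (u + ε * w) ^ (-(5:ℝ)/2) = (u + ε * w) * (u + ε * w) ^ (-(7:ℝ)/2) := by
    nth_rewrite 2 [show (u + ε * w) = (u + ε * w) ^ (1:ℝ) from (Real.rpow_one _).symm]
    rw [← Real.rpow_add hS']
    norm_num
  have hkey := key u w ε K d hu hw he0 he1 hK hd
  have h7 : (0:ℝ) ≤ (u + ε * w) ^ (-(7:ℝ)/2) := (Real.rpow_pos_of_pos hS' _).le
  calc (-(K + d * ε)^2 - 2*(K + d * ε^2)) * (u + ε * w) ^ (-(3:ℝ)/2)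
        + (6*(K + d * ε)*(u + ε^2*w) + 12*(u + ε^3*w)) * (u + ε * w) ^ (-(5:ℝ)/2)
        - 15*(u + ε^2*w)^2 * (u + ε * w) ^ (-(7:ℝ)/2)
      = -(((K + d*ε)^2 + 2*(K + d*ε^2)) * (u + ε*w)^2
          - (6*(K + d*ε)*(u + ε^2*w) + 12*(u + ε^3*w)) * (u + ε*w)
          + 15*(u + ε^2*w)^2) * ((u + ε * w) ^ (-(7:ℝ)/2)) := by
        rw [e1, e2]; ring
    _ ≤ 0 := mul_nonpos_of_nonpos_of_nonneg (neg_nonpos.2 hkey) h7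


lemma sum_ite_count (k : ℕ) (hkn : k ≤ n) (a b : ℝ) :
    ∑ i : Fin n, (if (i : ℕ) < k then a else b) = (k:ℝ) * a + ((n:ℝ) - (k:ℝ)) * b := by
  rw [Fin.sum_univ_eq_sum_range (fun i => if i < k then a else b) n, Finset.sum_ite,
    Finset.sum_const, Finset.sum_const]
  have hf : (Finset.range n).filter (fun i => i < k) = Finset.range k := by
    ext i
    simp only [Finset.mem_filter, Finset.mem_range]
    omega
  have hsub : Finset.range k ⊆ Finset.range n := Finset.range_subset_range.2 hkn
  have hc2 : ((Finset.range n).filter (fun i => ¬ i < k)).card = n - k := by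
    rw [Finset.filter_not, hf, Finset.card_sdiff_of_subset hsub, Finset.card_range, Finset.card_range]
  rw [hf, hc2, Finset.card_range, nsmul_eq_mul, nsmul_eq_mul, Nat.cast_sub hkn]

end Bilap

/-- For `n ≥ 2`, `3 ≤ k ≤ n` and `ε ∈ [0,1]`, the bilaplacian of
`ρ(x) = sqrt(x₁² + ⋯ + x_k² + ε(x_{k+1}² + ⋯ + x_n²))` is nonpositive away from the origin. -/
theorem bilaplacian_nonpos_k_ge_three (n k : ℕ) (hn : 2 ≤ n) (hk : 3 ≤ k) (hkn : k ≤ n)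
    (ε : ℝ) (hε : ε ∈ Set.Icc (0 : ℝ) 1)
    (x : EuclideanSpace ℝ (Fin n)) (hx : x ≠ 0) :
    lap (lap (fun y : EuclideanSpace ℝ (Fin n) =>
      Real.sqrt (∑ i : Fin n, (if (i : ℕ) < k then (1 : ℝ) else ε) * y i ^ 2))) x ≤ 0 := by
  obtain ⟨he0, he1⟩ := hε
  have hkR : (3:ℝ) ≤ (k:ℝ) := by exact_mod_cast hk
  have hdR : (0:ℝ) ≤ (n:ℝ) - (k:ℝ) := by
    have : (k:ℝ) ≤ (n:ℝ) := by exact_mod_cast hkn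
    linarith
  have hcnn : ∀ i : Fin n, 0 ≤ (if (i : ℕ) < k then (1:ℝ) else ε) := by
    intro i; split_ifs <;> [norm_num; exact he0]
  have hSnn : 0 ≤ ∑ i : Fin n, (if (i : ℕ) < k then (1:ℝ) else ε) * x i ^ 2 :=
    Finset.sum_nonneg fun i _ => mul_nonneg (hcnn i) (sq_nonneg _)
  rcases hSnn.eq_or_lt with hS0 | hSpos
  · -- degenerate case: forces ε = 0
    have hzero : ∀ i : Fin n, (if (i : ℕ) < k then (1:ℝ) else ε) * x i ^ 2 = 0 :=
      fun i => (Finset.sum_eq_zero_iff_of_nonneg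
        (fun i _ => mul_nonneg (hcnn i) (sq_nonneg _))).1 hS0.symm i (Finset.mem_univ i)
    obtain ⟨j, hj⟩ : ∃ j : Fin n, x j ≠ 0 := by
      by_contra h
      push_neg at h
      exact hx (by ext j; exact h j)
    have he : ε = 0 := by
      have hj2 := hzero j
      by_cases hjk : (j : ℕ) < k
      · rw [if_pos hjk, one_mul] at hj2
        exact absurd (pow_eq_zero_iff two_ne_zero |>.1 hj2) hj
      · rw [if_neg hjk] at hj2
        rcases mul_eq_zero.1 hj2 with h | h
        · exact h
        · exact absurd (pow_eq_zero_iff two_ne_zero |>.1 h) hj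
    subst he
    have h0n : 0 < n := by omega
    have hi0 : ((⟨0, h0n⟩ : Fin n) : ℕ) < k := by simpa using (by omega : 0 < k)
    refine le_of_eq (caseB (fun i => if (i : ℕ) < k then (1:ℝ) else 0) ⟨0, h0n⟩
      (if_pos hi0) (fun i => ?_) ?_ x hS0.symm)
    · by_cases h : (i : ℕ) < k
      · right; exact if_pos h
      · left; exact if_neg h
    · rw [sum_ite_count k hkn 1 0]
      linarith
  · -- main case
    have hsum1 : (∑ i : Fin n, (if (i : ℕ) < k then (1:ℝ) else ε))
        = (k:ℝ) + ((n:ℝ) - (k:ℝ)) * ε := by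
      rw [sum_ite_count k hkn 1 ε]; ring
    have hsum2 : (∑ i : Fin n, ((if (i : ℕ) < k then (1:ℝ) else ε))^2)
        = (k:ℝ) + ((n:ℝ) - (k:ℝ)) * ε^2 := by
      have hpt : ∀ i : Fin n, i ∈ Finset.univ → ((if (i : ℕ) < k then (1:ℝ) else ε))^2
          = if (i : ℕ) < k then (1:ℝ) else ε^2 := fun i _ => by split_ifs <;> ring
      rw [Finset.sum_congr rfl hpt, sum_ite_count k hkn 1 (ε^2)]
      ring
    have hsum3 : (∑ i : Fin n, ((if (i : ℕ) < k then (1:ℝ) else ε))^3)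
        = (k:ℝ) + ((n:ℝ) - (k:ℝ)) * ε^3 := by
      have hpt : ∀ i : Fin n, i ∈ Finset.univ → ((if (i : ℕ) < k then (1:ℝ) else ε))^3
          = if (i : ℕ) < k then (1:ℝ) else ε^3 := fun i _ => by split_ifs <;> ring
      rw [Finset.sum_congr rfl hpt, sum_ite_count k hkn 1 (ε^3)]
      ring
    have hu : (0:ℝ) ≤ ∑ i : Fin n, (if (i : ℕ) < k then x i ^ 2 else 0) :=
      Finset.sum_nonneg fun i _ => by split_ifs <;> [exact sq_nonneg _; exact le_refl 0]
    have hw : (0:ℝ) ≤ ∑ i : Fin n, (if (i : ℕ) < k then 0 else x i ^ 2) :=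
      Finset.sum_nonneg fun i _ => by split_ifs <;> [exact le_refl 0; exact sq_nonneg _]
    have hX : ∀ e : ℝ, (∑ i : Fin n, (if (i : ℕ) < k then (1:ℝ) else e) * x i ^ 2)
        = (∑ i : Fin n, (if (i : ℕ) < k then x i ^ 2 else 0))
          + e * (∑ i : Fin n, (if (i : ℕ) < k then 0 else x i ^ 2)) := by
      intro e
      rw [Finset.mul_sum, ← Finset.sum_add_distrib]
      exact Finset.sum_congr rfl fun i _ => by split_ifs <;> ring
    have hX2 : (∑ i : Fin n, ((if (i : ℕ) < k then (1:ℝ) else ε))^2 * x i ^ 2)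
        = (∑ i : Fin n, (if (i : ℕ) < k then x i ^ 2 else 0))
          + ε^2 * (∑ i : Fin n, (if (i : ℕ) < k then 0 else x i ^ 2)) := by
      rw [Finset.mul_sum, ← Finset.sum_add_distrib]
      exact Finset.sum_congr rfl fun i _ => by split_ifs <;> ring
    have hX3 : (∑ i : Fin n, ((if (i : ℕ) < k then (1:ℝ) else ε))^3 * x i ^ 2)
        = (∑ i : Fin n, (if (i : ℕ) < k then x i ^ 2 else 0))
          + ε^3 * (∑ i : Fin n, (if (i : ℕ) < k then 0 else x i ^ 2)) := by
      rw [Finset.mul_sum, ← Finset.sum_add_distrib]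
      exact Finset.sum_congr rfl fun i _ => by split_ifs <;> ring
    exact caseA_aux (fun i => if (i : ℕ) < k then (1:ℝ) else ε) x ε _ _ ((k:ℝ))
      ((n:ℝ) - (k:ℝ)) hu hw he0 he1 hkR hdR hsum1 hsum2 (hX ε) hX2 hX3 hSpos
end

section
/- Let n ≥ 3, k = 2, and ρ(x) = sqrt(x₁² + x₂² + ε(x₃² + ⋯ + x_n²)). Then for every ε with 1/n + sqrt(2(n−2)(n−1))/(n(n−2)) ≤ ε ≤ 1, one has Δ²ρ(x) ≤ 0 for all x ≠ 0. -/
open scoped BigOperators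

/-!
For a diagonal quadratic form `Q(y) = ∑ aᵢ yᵢ²` and `ρ = √Q` one has
`∂ᵢ (ρ ^ k) = k aᵢ yᵢ ρ ^ (k - 2)`, so on `{Q > 0}` both Laplacians of `ρ` can be computed in
closed form. For the weights `(1, 1, ε, …, ε)` the result collapses to
`Δ²ρ = A(ε) / ρ³ + B(ε) r² / ρ⁵ + C(ε) r⁴ / ρ⁷` with `r² = x₃² + ⋯ + x_n²`. Here `C ≤ 0` always,
`B = 6ε (nε - 1)(ε - 1) ≤ 0` for `1/n ≤ ε ≤ 1`, and `A ≤ 0` beyond its larger root, which is the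
lower bound imposed on `ε`.
-/

open Topology

variable {n : ℕ}

-- Every continuous linear functional on `ℝⁿ` has this form; derivatives are kept in it so that
-- partial derivatives are read off with `coordForm_single`.
noncomputable def coordForm (w : Fin n → ℝ) : EuclideanSpace ℝ (Fin n) →L[ℝ] ℝ :=
  ∑ i, w i • EuclideanSpace.proj i

@[simp]
lemma coordForm_single (w : Fin n → ℝ) (j : Fin n) :
    coordForm w (EuclideanSpace.single j 1) = w j := by
  simp [coordForm]

@[simp]
lemma smul_coordForm (c : ℝ) (w : Fin n → ℝ) : c • coordForm w = coordForm fun i => c * w i := by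
  simp [coordForm, Finset.smul_sum, smul_smul]

@[simp]
lemma coordForm_add (v w : Fin n → ℝ) : coordForm v + coordForm w = coordForm (v + w) := by
  simp [coordForm, add_smul, Finset.sum_add_distrib]

@[simp]
lemma coordForm_sub (v w : Fin n → ℝ) : coordForm v - coordForm w = coordForm (v - w) := by
  simp [coordForm, sub_smul, Finset.sum_sub_distrib]

theorem lap_eq_sum_of_hasFDerivAt {f : EuclideanSpace ℝ (Fin n) → ℝ}
    {D : Fin n → EuclideanSpace ℝ (Fin n) → ℝ} {D' : Fin n → EuclideanSpace ℝ (Fin n) →L[ℝ] ℝ}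
    {x : EuclideanSpace ℝ (Fin n)}
    (hf : ∀ᶠ z in 𝓝 x, HasFDerivAt f (coordForm fun i => D i z) z)
    (hD : ∀ i, HasFDerivAt (D i) (D' i) x) :
    lap f x = ∑ i, D' i (EuclideanSpace.single i 1) := by
  refine Finset.sum_congr rfl fun i _ => ?_
  have h : (fun z => fderiv ℝ f z (EuclideanSpace.single i 1)) =ᶠ[𝓝 x] D i :=
    hf.mono fun z hz => by simp only [hz.fderiv, coordForm_single]
  rw [h.fderiv_eq, (hD i).fderiv]

theorem lap_congr {f g : EuclideanSpace ℝ (Fin n) → ℝ} {x : EuclideanSpace ℝ (Fin n)}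
    (h : f =ᶠ[𝓝 x] g) : lap f x = lap g x := by
  refine Finset.sum_congr rfl fun i _ => ?_
  have h' : (fun z => fderiv ℝ f z (EuclideanSpace.single i 1))
      =ᶠ[𝓝 x] fun z => fderiv ℝ g z (EuclideanSpace.single i 1) :=
    (h.fderiv (𝕜 := ℝ)).mono fun z hz => by simp only [hz]
  rw [h'.fderiv_eq]

def diagQuad (a : Fin n → ℝ) (y : EuclideanSpace ℝ (Fin n)) : ℝ := ∑ i, a i * y i ^ 2

lemma diagQuad_nonneg {a : Fin n → ℝ} (ha : ∀ i, 0 ≤ a i) (y : EuclideanSpace ℝ (Fin n)) :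
    0 ≤ diagQuad a y :=
  Finset.sum_nonneg fun i _ => mul_nonneg (ha i) (sq_nonneg _)

lemma diagQuad_pos {a : Fin n → ℝ} (ha : ∀ i, 0 < a i) {y : EuclideanSpace ℝ (Fin n)}
    (hy : y ≠ 0) :
    0 < diagQuad a y := by
  obtain ⟨i, hi⟩ : ∃ i, y i ≠ 0 := by
    by_contra! h
    exact hy (by ext i; simpa using h i)
  exact Finset.sum_pos' (fun i _ => mul_nonneg (ha i).le (sq_nonneg _))
    ⟨i, Finset.mem_univ i, mul_pos (ha i) (by positivity)⟩

lemma hasFDerivAt_diagQuad (a : Fin n → ℝ) (y : EuclideanSpace ℝ (Fin n)) :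
    HasFDerivAt (diagQuad a) (coordForm fun i => 2 * (a i * y i)) y := by
  refine HasFDerivAt.fun_sum (u := Finset.univ) fun i _ => ?_
  refine (((PiLp.hasFDerivAt_apply (𝕜 := ℝ) 2 y i).pow 2).const_mul (a i)).congr_fderiv ?_
  rw [smul_smul]
  congr 1
  norm_num
  ring

lemma continuous_diagQuad (a : Fin n → ℝ) : Continuous (diagQuad a) :=
  continuous_iff_continuousAt.2 fun y => (hasFDerivAt_diagQuad a y).continuousAt

lemma hasFDerivAt_sqrt_diagQuad_zpow (a : Fin n → ℝ) {y : EuclideanSpace ℝ (Fin n)}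
    (hy : 0 < diagQuad a y) (k : ℤ) :
    HasFDerivAt (fun z => √(diagQuad a z) ^ k)
      (coordForm fun i => k * √(diagQuad a y) ^ (k - 2) * (a i * y i)) y := by
  have hρ : √(diagQuad a y) ≠ 0 := (Real.sqrt_pos.2 hy).ne'
  have h := (hasDerivAt_zpow k _ (Or.inl hρ)).comp_hasFDerivAt y
    ((hasFDerivAt_diagQuad a y).sqrt hy.ne')
  refine h.congr_fderiv ?_
  rw [smul_coordForm, smul_coordForm]
  congr 1
  funext i
  rw [zpow_sub₀ hρ, zpow_sub₀ hρ]
  field_simp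

lemma hasFDerivAt_sqrt_diagQuad (a : Fin n → ℝ) {y : EuclideanSpace ℝ (Fin n)}
    (hy : 0 < diagQuad a y) :
    HasFDerivAt (fun z => √(diagQuad a z))
      (coordForm fun i => √(diagQuad a y) ^ (-1 : ℤ) * (a i * y i)) y := by
  simpa using hasFDerivAt_sqrt_diagQuad_zpow a hy 1

theorem lap_sqrt_diagQuad (a : Fin n → ℝ) {y : EuclideanSpace ℝ (Fin n)}
    (hy : 0 < diagQuad a y) :
    lap (fun z => √(diagQuad a z)) y = (∑ i, a i) * √(diagQuad a y) ^ (-1 : ℤ)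
      - diagQuad (fun i => a i ^ 2) y * √(diagQuad a y) ^ (-3 : ℤ) := by
  have hU := (isOpen_lt continuous_const (continuous_diagQuad a)).eventually_mem hy
  rw [lap_eq_sum_of_hasFDerivAt (hU.mono fun z hz => hasFDerivAt_sqrt_diagQuad a hz)
    fun i => (hasFDerivAt_sqrt_diagQuad_zpow a hy (-1)).mul
      ((PiLp.hasFDerivAt_apply (𝕜 := ℝ) 2 y i).const_mul (a i))]
  simp only [Int.reduceNeg, zpow_neg, zpow_ofNat, pow_one, Int.cast_neg, Int.cast_one,
    Int.reduceSub, smul_coordForm, add_apply, smul_apply, PiLp.proj_apply, PiLp.single_eq_same,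
    smul_eq_mul, mul_one, coordForm_single]
  rw [Finset.sum_congr rfl fun i _ => show _ = a i * (√(diagQuad a y))⁻¹
    - a i ^ 2 * y i ^ 2 * (√(diagQuad a y) ^ 3)⁻¹ by ring, Finset.sum_sub_distrib,
    ← Finset.sum_mul, ← Finset.sum_mul]
  rfl

lemma hasFDerivAt_lap_sqrt_diagQuad (a : Fin n → ℝ) {z : EuclideanSpace ℝ (Fin n)}
    (hz : 0 < diagQuad a z) :
    HasFDerivAt (fun y => (∑ i, a i) * √(diagQuad a y) ^ (-1 : ℤ)
        - diagQuad (fun i => a i ^ 2) y * √(diagQuad a y) ^ (-3 : ℤ))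
      (coordForm fun j => (-(∑ i, a i + 2 * a j) * √(diagQuad a z) ^ (-3 : ℤ)
        + 3 * diagQuad (fun i => a i ^ 2) z * √(diagQuad a z) ^ (-5 : ℤ)) * (a j * z j)) z := by
  refine (((hasFDerivAt_sqrt_diagQuad_zpow a hz (-1)).const_mul (∑ i, a i)).sub
    ((hasFDerivAt_diagQuad _ z).mul (hasFDerivAt_sqrt_diagQuad_zpow a hz (-3)))).congr_fderiv ?_
  simp only [smul_coordForm, coordForm_add, coordForm_sub]
  congr 1
  funext j
  simp only [Int.cast_neg, Int.cast_one, Int.cast_ofNat, Int.reduceSub, Pi.sub_apply,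
    Pi.add_apply]
  ring

theorem lap_lap_sqrt_diagQuad (a : Fin n → ℝ) {x : EuclideanSpace ℝ (Fin n)}
    (hx : 0 < diagQuad a x) :
    lap (lap fun z => √(diagQuad a z)) x
      = -((∑ i, a i) ^ 2 + 2 * ∑ i, a i ^ 2) * √(diagQuad a x) ^ (-3 : ℤ)
        + (6 * (∑ i, a i) * diagQuad (fun i => a i ^ 2) x + 12 * diagQuad (fun i => a i ^ 3) x)
          * √(diagQuad a x) ^ (-5 : ℤ)
        - 15 * diagQuad (fun i => a i ^ 2) x ^ 2 * √(diagQuad a x) ^ (-7 : ℤ) := by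
  have hU := (isOpen_lt continuous_const (continuous_diagQuad a)).eventually_mem hx
  have hG : lap (fun z => √(diagQuad a z)) =ᶠ[𝓝 x] fun z =>
      (∑ i, a i) * √(diagQuad a z) ^ (-1 : ℤ)
        - diagQuad (fun i => a i ^ 2) z * √(diagQuad a z) ^ (-3 : ℤ) :=
    hU.mono fun z hz => lap_sqrt_diagQuad a hz
  rw [lap_congr hG,
    lap_eq_sum_of_hasFDerivAt (hU.mono fun z hz => hasFDerivAt_lap_sqrt_diagQuad a hz) fun j =>
      (((hasFDerivAt_sqrt_diagQuad_zpow a hx (-3)).const_mul (-(∑ i, a i + 2 * a j))).add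
        (((hasFDerivAt_diagQuad _ x).const_mul 3).mul
          (hasFDerivAt_sqrt_diagQuad_zpow a hx (-5)))).mul
        ((PiLp.hasFDerivAt_apply (𝕜 := ℝ) 2 x j).const_mul (a j))]
  simp only [Int.reduceNeg, zpow_neg, zpow_ofNat, Int.cast_neg, Int.cast_ofNat, Int.reduceSub,
    Pi.add_apply, Pi.mul_apply, smul_coordForm, coordForm_add, add_apply, smul_apply,
    PiLp.proj_apply, PiLp.single_eq_same, smul_eq_mul, mul_one, coordForm_single]
  set S₂ := diagQuad (fun i => a i ^ 2) x
  set r := √(diagQuad a x)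
  rw [Finset.sum_congr rfl fun j _ => show _ = a j * (-(∑ i, a i) * (r ^ 3)⁻¹ + 3 * S₂ * (r ^ 5)⁻¹)
    + a j ^ 2 * (-2 * (r ^ 3)⁻¹) + a j ^ 2 * x j ^ 2 * (3 * (∑ i, a i) * (r ^ 5)⁻¹
    - 15 * S₂ * (r ^ 7)⁻¹) + a j ^ 3 * x j ^ 2 * (12 * (r ^ 5)⁻¹) by ring]
  simp only [Finset.sum_add_distrib, ← Finset.sum_mul]
  change _ + S₂ * _ + diagQuad (fun i => a i ^ 3) x * _ = _
  ring

def splitWeight (k : ℕ) (c d : ℝ) (i : Fin n) : ℝ := if (i : ℕ) < k then c else d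

lemma splitWeight_pow (k m : ℕ) (c d : ℝ) :
    (fun i => splitWeight k c d i ^ m) = splitWeight (n := n) k (c ^ m) (d ^ m) := by
  funext i
  unfold splitWeight
  split_ifs <;> rfl

lemma sum_splitWeight {k : ℕ} (hk : k ≤ n) (c d : ℝ) :
    ∑ i, splitWeight (n := n) k c d i = k * c + ((n : ℝ) - k) * d := by
  simp only [splitWeight]
  rw [Fin.sum_univ_eq_sum_range (fun i => if i < k then c else d),
    ← Finset.sum_range_add_sum_Ico _ hk,
    Finset.sum_congr rfl fun i hi => if_pos (Finset.mem_range.1 hi),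
    Finset.sum_congr rfl fun i hi => if_neg (Finset.mem_Ico.1 hi).1.not_gt]
  simp [Nat.cast_sub hk]

lemma diagQuad_splitWeight (k : ℕ) (c d : ℝ) (x : EuclideanSpace ℝ (Fin n)) :
    diagQuad (splitWeight k c d) x
      = c * diagQuad (splitWeight k 1 0) x + d * diagQuad (splitWeight k 0 1) x := by
  simp only [diagQuad, Finset.mul_sum, ← Finset.sum_add_distrib]
  refine Finset.sum_congr rfl fun i _ => ?_
  unfold splitWeight
  split_ifs <;> ring

def coeffA (n : ℕ) (ε : ℝ) : ℝ := -n * (n - 2) * ε ^ 2 + 2 * (n - 2) * ε + 1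

def coeffB (n : ℕ) (ε : ℝ) : ℝ := 6 * ε * (n * ε ^ 2 - (n + 1) * ε + 1)

def coeffC (ε : ℝ) : ℝ := -15 * ε ^ 2 * (ε - 1) ^ 2

theorem lap_lap_sqrt_diagQuad_splitWeight_two (hn : 2 ≤ n) (ε : ℝ) {x : EuclideanSpace ℝ (Fin n)}
    (hx : 0 < diagQuad (splitWeight 2 1 ε) x) :
    lap (lap fun z => √(diagQuad (splitWeight 2 1 ε) z)) x
      = coeffA n ε * √(diagQuad (splitWeight 2 1 ε) x) ^ (-3 : ℤ)
        + coeffB n ε * diagQuad (splitWeight 2 0 1) x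
          * √(diagQuad (splitWeight 2 1 ε) x) ^ (-5 : ℤ)
        + coeffC ε * diagQuad (splitWeight 2 0 1) x ^ 2
          * √(diagQuad (splitWeight 2 1 ε) x) ^ (-7 : ℤ) := by
  rw [lap_lap_sqrt_diagQuad _ hx, splitWeight_pow, splitWeight_pow, sum_splitWeight hn,
    sum_splitWeight hn, diagQuad_splitWeight 2 (1 ^ 2), diagQuad_splitWeight 2 (1 ^ 3)]
  have hρ : √(diagQuad (splitWeight 2 1 ε) x) ^ 2
      = diagQuad (splitWeight 2 1 0) x + ε * diagQuad (splitWeight 2 0 1) x := by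
    rw [Real.sq_sqrt hx.le, diagQuad_splitWeight, one_mul]
  have hρ₀ : √(diagQuad (splitWeight 2 1 ε) x) ≠ 0 := (Real.sqrt_pos.2 hx).ne'
  generalize √(diagQuad (splitWeight 2 1 ε) x) = ρ at *
  generalize diagQuad (splitWeight 2 0 1) x = t at *
  generalize diagQuad (splitWeight 2 1 0) x = s at *
  obtain rfl : s = ρ ^ 2 - ε * t := by linarith
  simp only [coeffA, coeffB, coeffC, zpow_neg, zpow_ofNat]
  field_simp
  ring

-- `n(n-2) A(ε) = 2(n-2)(n-1) - (n(n-2)ε - (n-2))²`, so the threshold is the larger root of `A`.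
lemma coeffA_nonpos {n : ℕ} (hn : 3 ≤ n) {ε : ℝ}
    (hε : 1 / (n : ℝ) + √(2 * ((n : ℝ) - 2) * ((n : ℝ) - 1)) / ((n : ℝ) * ((n : ℝ) - 2)) ≤ ε) :
    coeffA n ε ≤ 0 := by
  have hn' : (3 : ℝ) ≤ n := by exact_mod_cast hn
  have hm : 0 < (n : ℝ) * (n - 2) := by nlinarith
  set D := 2 * ((n : ℝ) - 2) * ((n : ℝ) - 1)
  have hroot : √D ≤ n * (n - 2) * ε - (n - 2) := calc
    √D ≤ (ε - 1 / n) * (n * (n - 2)) := (div_le_iff₀ hm).1 (by linarith)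
    _ = n * (n - 2) * ε - (n - 2) := by field_simp
  have hsq : D ≤ (n * (n - 2) * ε - (n - 2)) ^ 2 := calc
    D = √D ^ 2 := (Real.sq_sqrt (mul_nonneg (by linarith) (by linarith))).symm
    _ ≤ _ := pow_le_pow_left₀ (Real.sqrt_nonneg D) hroot 2
  have hmA : (n : ℝ) * (n - 2) * coeffA n ε = D - (n * (n - 2) * ε - (n - 2)) ^ 2 := by
    unfold coeffA D; ring
  exact nonpos_of_mul_nonpos_right (by linarith) hm

lemma coeffB_nonpos {n : ℕ} (hn : 0 < n) {ε : ℝ} (h₁ : 1 / (n : ℝ) ≤ ε) (h₂ : ε ≤ 1) :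
    coeffB n ε ≤ 0 := by
  have hn' : (0 : ℝ) < n := by exact_mod_cast hn
  have hε : 0 < ε := lt_of_lt_of_le (by positivity) h₁
  have hnε : 1 ≤ n * ε := by rwa [div_le_iff₀' hn'] at h₁
  rw [show coeffB n ε = 6 * ε * (n * ε - 1) * (ε - 1) by unfold coeffB; ring]
  exact mul_nonpos_of_nonneg_of_nonpos (by positivity) (by linarith)

lemma coeffC_nonpos (ε : ℝ) : coeffC ε ≤ 0 := by
  have : 0 ≤ 15 * ε ^ 2 * (ε - 1) ^ 2 := by positivity
  unfold coeffC; linarith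

/-- For `n ≥ 3`, `k = 2` and `1/n + sqrt(2(n−2)(n−1))/(n(n−2)) ≤ ε ≤ 1`, the bilaplacian of
`ρ(x) = sqrt(x₁² + x₂² + ε(x₃² + ⋯ + x_n²))` is nonpositive away from the origin. -/
theorem bilaplacian_nonpos_k_eq_two (n : ℕ) (hn : 3 ≤ n) (ε : ℝ)
    (hε₁ : 1 / (n : ℝ) + Real.sqrt (2 * ((n : ℝ) - 2) * ((n : ℝ) - 1)) / ((n : ℝ) * ((n : ℝ) - 2)) ≤ ε)
    (hε₂ : ε ≤ 1)
    (x : EuclideanSpace ℝ (Fin n)) (hx : x ≠ 0) :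
    lap (lap (fun y : EuclideanSpace ℝ (Fin n) =>
      Real.sqrt (∑ i : Fin n, (if (i : ℕ) < 2 then (1 : ℝ) else ε) * y i ^ 2))) x ≤ 0 := by
  have hn' : (3 : ℝ) ≤ n := by exact_mod_cast hn
  have hε : 1 / (n : ℝ) ≤ ε :=
    le_trans (le_add_of_nonneg_right (div_nonneg (Real.sqrt_nonneg _) (by nlinarith))) hε₁
  have hε₀ : 0 < ε := lt_of_lt_of_le (by positivity) hε
  have hQ : 0 < diagQuad (splitWeight 2 1 ε) x :=
    diagQuad_pos (fun i => by unfold splitWeight; split_ifs <;> positivity) hx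
  have hr : 0 ≤ diagQuad (splitWeight 2 0 1) x :=
    diagQuad_nonneg (fun i => by unfold splitWeight; split_ifs <;> norm_num) x
  have hρ (k : ℤ) : 0 ≤ √(diagQuad (splitWeight 2 1 ε) x) ^ k :=
    zpow_nonneg (Real.sqrt_nonneg _) k
  change lap (lap fun y => √(diagQuad (splitWeight 2 1 ε) y)) x ≤ 0
  rw [lap_lap_sqrt_diagQuad_splitWeight_two (by omega) ε hQ]
  have hA := coeffA_nonpos hn hε₁
  have hB := coeffB_nonpos (by omega) hε hε₂
  have hC := coeffC_nonpos ε
  exact add_nonpos (add_nonpos (mul_nonpos_of_nonpos_of_nonneg hA (hρ _))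
    (mul_nonpos_of_nonpos_of_nonneg (mul_nonpos_of_nonpos_of_nonneg hB hr) (hρ _)))
    (mul_nonpos_of_nonpos_of_nonneg (mul_nonpos_of_nonpos_of_nonneg hC (sq_nonneg _)) (hρ _))
end

section
/- Let n ≥ 2, k = 1, and ρ(x) = sqrt(x₁² + ε(x₂² + ⋯ + x_n²)). Then for every ε with 4/(n+1) ≤ ε ≤ 1, one has Δ²ρ(x) ≤ 0 for all x ≠ 0. -/
open scoped BigOperators

noncomputable section BilapAux

variable {n : ℕ}

def Qf (c : Fin n → ℝ) (y : EuclideanSpace ℝ (Fin n)) : ℝ := ∑ i, c i * y i ^ 2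

def Df (c : Fin n → ℝ) (y : EuclideanSpace ℝ (Fin n)) : EuclideanSpace ℝ (Fin n) →L[ℝ] ℝ :=
  ∑ i, (2 * c i * y i) • (EuclideanSpace.proj i : EuclideanSpace ℝ (Fin n) →L[ℝ] ℝ)

lemma hasFDerivAt_coord (i : Fin n) (y : EuclideanSpace ℝ (Fin n)) :
    HasFDerivAt (fun z : EuclideanSpace ℝ (Fin n) => z i)
      (EuclideanSpace.proj i : EuclideanSpace ℝ (Fin n) →L[ℝ] ℝ) y :=
  (EuclideanSpace.proj (𝕜 := ℝ) i).hasFDerivAt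

lemma hasFDerivAt_Qf (c : Fin n → ℝ) (y : EuclideanSpace ℝ (Fin n)) :
    HasFDerivAt (Qf c) (Df c y) y := by
  have h : ∀ i : Fin n, HasFDerivAt (fun z : EuclideanSpace ℝ (Fin n) => c i * z i ^ 2)
      ((2 * c i * y i) • (EuclideanSpace.proj i : EuclideanSpace ℝ (Fin n) →L[ℝ] ℝ)) y := by
    intro i
    have h1 := hasFDerivAt_coord i y
    have h2 := (h1.mul h1).const_mul (c i)
    refine HasFDerivAt.congr_fderiv (HasFDerivAt.congr_of_eventuallyEq h2 (Filter.Eventually.of_forall fun z => ?_)) ?_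
    · simp only [PiLp.proj_apply, Pi.mul_apply]; ring
    · ext v
      simp only [ContinuousLinearMap.smul_apply, ContinuousLinearMap.add_apply,
        smul_eq_mul, PiLp.proj_apply]
      ring
  have := HasFDerivAt.fun_sum (fun i (_ : i ∈ Finset.univ) => h i)
  exact this

lemma Df_single (c : Fin n → ℝ) (y : EuclideanSpace ℝ (Fin n)) (j : Fin n) :
    Df c y (EuclideanSpace.single j 1) = 2 * c j * y j := by
  simp [Df, ContinuousLinearMap.sum_apply, ContinuousLinearMap.smul_apply,
    PiLp.proj_apply, EuclideanSpace.single_apply, mul_ite, Finset.sum_ite_eq]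

lemma hasFDerivAt_Qf_rpow (c : Fin n → ℝ) {y : EuclideanSpace ℝ (Fin n)}
    (hy : Qf c y ≠ 0) (p : ℝ) :
    HasFDerivAt (fun z => Qf c z ^ p) ((p * Qf c y ^ (p - 1)) • Df c y) y :=
  (Real.hasDerivAt_rpow_const (Or.inl hy)).comp_hasFDerivAt y (hasFDerivAt_Qf c y)

lemma fderiv_prod_single (c : Fin n → ℝ) {y : EuclideanSpace ℝ (Fin n)}
    (hy : Qf c y ≠ 0) (a p : ℝ) (i : Fin n) :
    fderiv ℝ (fun z => a * z i * Qf c z ^ p) y (EuclideanSpace.single i 1)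
      = a * Qf c y ^ p + a * y i * (p * Qf c y ^ (p - 1) * (2 * c i * y i)) := by
  have h3 := ((hasFDerivAt_coord i y).const_mul a).fun_mul (hasFDerivAt_Qf_rpow c hy p)
  rw [h3.fderiv]
  simp only [ContinuousLinearMap.add_apply, ContinuousLinearMap.smul_apply, smul_eq_mul,
    Df_single, PiLp.proj_apply, EuclideanSpace.single_apply, if_pos rfl, if_true]
  ring

lemma fderiv_k_single (c d : Fin n → ℝ) {y : EuclideanSpace ℝ (Fin n)}
    (hy : Qf c y ≠ 0) (a b p q : ℝ) (i : Fin n) :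
    fderiv ℝ (fun z => a * z i * Qf c z ^ p + b * z i * Qf d z * Qf c z ^ q) y
        (EuclideanSpace.single i 1)
      = (a * Qf c y ^ p + a * y i * (p * Qf c y ^ (p - 1) * (2 * c i * y i)))
        + (b * Qf d y * Qf c y ^ q + b * y i * (2 * d i * y i) * Qf c y ^ q
          + b * y i * Qf d y * (q * Qf c y ^ (q - 1) * (2 * c i * y i))) := by
  have h3 := ((hasFDerivAt_coord i y).const_mul a).fun_mul (hasFDerivAt_Qf_rpow c hy p)
  have h4 := (((hasFDerivAt_coord i y).const_mul b).fun_mul (hasFDerivAt_Qf d y)).fun_mul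
    (hasFDerivAt_Qf_rpow c hy q)
  rw [(h3.fun_add h4).fderiv]
  simp only [ContinuousLinearMap.add_apply, ContinuousLinearMap.smul_apply, smul_eq_mul,
    Df_single, PiLp.proj_apply, EuclideanSpace.single_apply, if_pos rfl, if_true]
  ring

/-- derivative of the "lap f" expression -/
lemma fderiv_g_single (c d : Fin n → ℝ) {z : EuclideanSpace ℝ (Fin n)}
    (hz : Qf c z ≠ 0) (S : ℝ) (i : Fin n) :
    fderiv ℝ (fun w => S * Qf c w ^ (-(1/2) : ℝ) + -1 * Qf d w * Qf c w ^ (-(3/2) : ℝ)) z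
        (EuclideanSpace.single i 1)
      = (-(S * c i) - 2 * d i) * z i * Qf c z ^ (-(3/2) : ℝ)
        + 3 * c i * z i * Qf d z * Qf c z ^ (-(5/2) : ℝ) := by
  have h1 := (hasFDerivAt_Qf_rpow c hz (-(1/2))).const_mul S
  have h2 := ((hasFDerivAt_Qf d z).const_mul (-1 : ℝ)).fun_mul (hasFDerivAt_Qf_rpow c hz (-(3/2)))
  rw [(h1.fun_add h2).fderiv]
  simp only [ContinuousLinearMap.add_apply, ContinuousLinearMap.smul_apply, smul_eq_mul,
    Df_single]
  rw [show (-(1/2) - 1 : ℝ) = -(3/2) by norm_num, show (-(3/2) - 1 : ℝ) = -(5/2) by norm_num]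
  ring

end BilapAux

section Main

theorem bilap_aux (n : ℕ) (hn : 2 ≤ n) (ε : ℝ)
    (hε₁ : 4 / ((n : ℝ) + 1) ≤ ε) (hε₂ : ε ≤ 1)
    (c : Fin n → ℝ) (hc : c = fun i : Fin n => if (i : ℕ) < 1 then (1 : ℝ) else ε)
    (x : EuclideanSpace ℝ (Fin n)) (hx : x ≠ 0) :
    lap (lap (fun y : EuclideanSpace ℝ (Fin n) => Qf c y ^ ((1:ℝ)/2))) x ≤ 0 := by
  classical
  have hNZ : NeZero n := ⟨by omega⟩
  have hn1 : (0:ℝ) < (n:ℝ) + 1 := by positivity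
  have hε0 : 0 < ε := lt_of_lt_of_le (by positivity) hε₁
  have hcpos : ∀ i, 0 < c i := by
    intro i
    rw [hc]
    dsimp only
    split
    · norm_num
    · exact hε0
  -- positivity of Q away from 0
  have hQpos : ∀ y : EuclideanSpace ℝ (Fin n), y ≠ 0 → 0 < Qf c y := by
    intro y hy
    obtain ⟨j, hj⟩ : ∃ j, y j ≠ 0 := by
      by_contra h
      push_neg at h
      exact hy (by ext j; exact h j)
    have h1 : 0 < c j * y j ^ 2 := by
      have h0 : 0 ≤ y j ^ 2 := sq_nonneg _
      have h1 : y j ^ 2 ≠ 0 := pow_ne_zero 2 hj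
      exact mul_pos (hcpos j) (lt_of_le_of_ne h0 (Ne.symm h1))
    have h2 : c j * y j ^ 2 ≤ Qf c y :=
      Finset.single_le_sum (f := fun i => c i * y i ^ 2)
        (fun i _ => mul_nonneg (hcpos i).le (sq_nonneg _)) (Finset.mem_univ j)
    linarith
  set U : Set (EuclideanSpace ℝ (Fin n)) := {y | 0 < Qf c y} with hU
  have hUopen : IsOpen U := by
    have hcont : Continuous (Qf c) :=
      continuous_iff_continuousAt.mpr fun y => (hasFDerivAt_Qf c y).continuousAt
    exact isOpen_lt continuous_const hcont
  set c2 : Fin n → ℝ := fun i => c i ^ 2 with hc2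
  set c3 : Fin n → ℝ := fun i => c i ^ 3 with hc3
  set S : ℝ := ∑ i, c i with hS
  set S2 : ℝ := ∑ i, c2 i with hS2
  -- step 1 : first derivatives of f
  have hstep1 : ∀ y ∈ U, ∀ i : Fin n,
      fderiv ℝ (fun z : EuclideanSpace ℝ (Fin n) => Qf c z ^ ((1:ℝ)/2)) y
        (EuclideanSpace.single i 1) = c i * y i * Qf c y ^ (-(1/2) : ℝ) := by
    intro y hy i
    have hy0 : 0 < Qf c y := hy
    have hy' : Qf c y ≠ 0 := hy0.ne'
    rw [(hasFDerivAt_Qf_rpow c hy' ((1:ℝ)/2)).fderiv]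
    simp only [ContinuousLinearMap.smul_apply, smul_eq_mul, Df_single]
    rw [show ((1:ℝ)/2 - 1 : ℝ) = -(1/2) by norm_num]
    ring
  -- step 2 : lap f on U
  have hlapf : ∀ y ∈ U,
      lap (fun z : EuclideanSpace ℝ (Fin n) => Qf c z ^ ((1:ℝ)/2)) y
        = S * Qf c y ^ (-(1/2) : ℝ) + -1 * Qf c2 y * Qf c y ^ (-(3/2) : ℝ) := by
    intro y hy
    have hy0 : 0 < Qf c y := hy
    have hy' : Qf c y ≠ 0 := hy0.ne'
    have hi : ∀ i ∈ Finset.univ, fderiv ℝ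
        (fun z => fderiv ℝ (fun z : EuclideanSpace ℝ (Fin n) => Qf c z ^ ((1:ℝ)/2)) z
          (EuclideanSpace.single i 1)) y (EuclideanSpace.single i 1)
        = c i * Qf c y ^ (-(1/2):ℝ)
          + c i * y i * (-(1/2) * Qf c y ^ (-(1/2) - 1 : ℝ) * (2 * c i * y i)) := by
      intro i _
      have heq : (fun z => fderiv ℝ (fun z : EuclideanSpace ℝ (Fin n) => Qf c z ^ ((1:ℝ)/2)) z
          (EuclideanSpace.single i 1))
          =ᶠ[nhds y] fun z => c i * z i * Qf c z ^ (-(1/2) : ℝ) :=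
        Filter.eventuallyEq_of_mem (hUopen.mem_nhds hy) (fun z hz => hstep1 z hz i)
      rw [heq.fderiv_eq]
      exact fderiv_prod_single c hy' (c i) (-(1/2)) i
    show (∑ i : Fin n, fderiv ℝ
        (fun z => fderiv ℝ (fun z : EuclideanSpace ℝ (Fin n) => Qf c z ^ ((1:ℝ)/2)) z
          (EuclideanSpace.single i 1)) y (EuclideanSpace.single i 1)) = _
    rw [Finset.sum_congr rfl hi]
    rw [show (-(1/2) - 1 : ℝ) = -(3/2) by norm_num]
    have : ∀ i ∈ Finset.univ, c i * Qf c y ^ (-(1/2):ℝ)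
        + c i * y i * (-(1/2) * Qf c y ^ (-(3/2):ℝ) * (2 * c i * y i))
        = c i * Qf c y ^ (-(1/2):ℝ)
          + (c2 i * y i ^ 2) * (-1 * Qf c y ^ (-(3/2):ℝ)) := by
      intro i _
      simp only [hc2]
      ring
    rw [Finset.sum_congr rfl this, Finset.sum_add_distrib, ← Finset.sum_mul, ← Finset.sum_mul,
      ← hS]
    have hT : ∑ i, c2 i * y i ^ 2 = Qf c2 y := rfl
    rw [hT]
    ring
  -- outer laplacian
  have hx0 : 0 < Qf c x := hQpos x hx
  have hx' : Qf c x ≠ 0 := hx0.ne'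
  have hxU : x ∈ U := hx0
  have hstep2 : ∀ z ∈ U, ∀ i : Fin n,
      fderiv ℝ (lap (fun y : EuclideanSpace ℝ (Fin n) => Qf c y ^ ((1:ℝ)/2))) z
          (EuclideanSpace.single i 1)
        = (-(S * c i) - 2 * c2 i) * z i * Qf c z ^ (-(3/2) : ℝ)
          + 3 * c i * z i * Qf c2 z * Qf c z ^ (-(5/2) : ℝ) := by
    intro z hz i
    have hz0 : 0 < Qf c z := hz
    have heq : lap (fun y : EuclideanSpace ℝ (Fin n) => Qf c y ^ ((1:ℝ)/2))
        =ᶠ[nhds z] fun w => S * Qf c w ^ (-(1/2) : ℝ) + -1 * Qf c2 w * Qf c w ^ (-(3/2) : ℝ) :=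
      Filter.eventuallyEq_of_mem (hUopen.mem_nhds hz) hlapf
    rw [heq.fderiv_eq]
    exact fderiv_g_single c c2 hz0.ne' S i
  have houter : ∀ i ∈ Finset.univ, fderiv ℝ
      (fun z => fderiv ℝ (lap (fun y : EuclideanSpace ℝ (Fin n) => Qf c y ^ ((1:ℝ)/2))) z
        (EuclideanSpace.single i 1)) x (EuclideanSpace.single i 1)
      = (((-(S * c i) - 2 * c2 i) * Qf c x ^ (-(3/2):ℝ)
          + (-(S * c i) - 2 * c2 i) * x i
            * (-(3/2) * Qf c x ^ (-(3/2) - 1 : ℝ) * (2 * c i * x i)))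
        + (3 * c i * Qf c2 x * Qf c x ^ (-(5/2):ℝ)
          + 3 * c i * x i * (2 * c2 i * x i) * Qf c x ^ (-(5/2):ℝ)
          + 3 * c i * x i * Qf c2 x
            * (-(5/2) * Qf c x ^ (-(5/2) - 1 : ℝ) * (2 * c i * x i)))) := by
    intro i _
    have heq2 : (fun z => fderiv ℝ
        (lap (fun y : EuclideanSpace ℝ (Fin n) => Qf c y ^ ((1:ℝ)/2))) z
        (EuclideanSpace.single i 1))
        =ᶠ[nhds x] fun z => (-(S * c i) - 2 * c2 i) * z i * Qf c z ^ (-(3/2) : ℝ)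
          + 3 * c i * z i * Qf c2 z * Qf c z ^ (-(5/2) : ℝ) :=
      Filter.eventuallyEq_of_mem (hUopen.mem_nhds hxU) (fun z hz => hstep2 z hz i)
    rw [heq2.fderiv_eq]
    exact fderiv_k_single c c2 hx' (-(S * c i) - 2 * c2 i) (3 * c i) (-(3/2)) (-(5/2)) i
  show (∑ i : Fin n, fderiv ℝ
      (fun z => fderiv ℝ (lap (fun y : EuclideanSpace ℝ (Fin n) => Qf c y ^ ((1:ℝ)/2))) z
        (EuclideanSpace.single i 1)) x (EuclideanSpace.single i 1)) ≤ 0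
  rw [Finset.sum_congr rfl houter]
  rw [show (-(3/2) - 1 : ℝ) = -(5/2) by norm_num, show (-(5/2) - 1 : ℝ) = -(7/2) by norm_num]
  set M3 : ℝ := Qf c x ^ (-(3/2):ℝ) with hM3d
  set M5 : ℝ := Qf c x ^ (-(5/2):ℝ) with hM5d
  set M7 : ℝ := Qf c x ^ (-(7/2):ℝ) with hM7d
  set T : ℝ := Qf c2 x with hTd
  set Uf : ℝ := Qf c3 x with hUfd
  have hterm : ∀ i ∈ Finset.univ,
      (((-(S * c i) - 2 * c2 i) * M3
        + (-(S * c i) - 2 * c2 i) * x i * (-(3/2) * M5 * (2 * c i * x i)))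
      + (3 * c i * T * M5 + 3 * c i * x i * (2 * c2 i * x i) * M5
        + 3 * c i * x i * T * (-(5/2) * M7 * (2 * c i * x i))))
      = c i * (-S * M3 + 3 * T * M5) + c2 i * (-2 * M3)
        + (c2 i * x i ^ 2) * (3 * S * M5 - 15 * T * M7)
        + (c3 i * x i ^ 2) * (12 * M5) := by
    intro i _
    simp only [hc2, hc3]
    ring
  rw [Finset.sum_congr rfl hterm]
  rw [Finset.sum_add_distrib, Finset.sum_add_distrib, Finset.sum_add_distrib,
    ← Finset.sum_mul, ← Finset.sum_mul, ← Finset.sum_mul, ← Finset.sum_mul, ← hS, ← hS2]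
  have hTT : ∑ i, c2 i * x i ^ 2 = T := rfl
  have hUU : ∑ i, c3 i * x i ^ 2 = Uf := rfl
  rw [hTT, hUU]
  -- algebraic identities
  set R : ℝ := ∑ i ∈ Finset.univ.erase (0 : Fin n), x i ^ 2 with hRd
  have hsplit : ∀ (d : Fin n → ℝ) (ee : ℝ), d 0 = 1 →
      (∀ i ∈ Finset.univ.erase (0 : Fin n), d i = ee) →
      Qf d x = x 0 ^ 2 + ee * R := by
    intro d ee h0 he
    rw [Qf, ← Finset.add_sum_erase _ _ (Finset.mem_univ (0 : Fin n)), h0, one_mul]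
    congr 1
    rw [hRd, Finset.mul_sum]
    exact Finset.sum_congr rfl fun i hi => by rw [he i hi]
  have hssplit : ∀ (d : Fin n → ℝ) (ee : ℝ), d 0 = 1 →
      (∀ i ∈ Finset.univ.erase (0 : Fin n), d i = ee) →
      ∑ i, d i = 1 + ((n:ℝ) - 1) * ee := by
    intro d ee h0 he
    rw [← Finset.add_sum_erase _ _ (Finset.mem_univ (0 : Fin n)), h0,
      Finset.sum_congr rfl he, Finset.sum_const, Finset.card_erase_of_mem (Finset.mem_univ _),
      Finset.card_univ, Fintype.card_fin, nsmul_eq_mul, Nat.cast_sub (by omega), Nat.cast_one]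
  have hc0 : c 0 = 1 := by rw [hc]; simp
  have hcer : ∀ i ∈ Finset.univ.erase (0 : Fin n), c i = ε := by
    intro i hi
    have h1 : i ≠ 0 := (Finset.mem_erase.mp hi).1
    have h2 : (i : ℕ) ≠ 0 := by
      intro h
      exact h1 (Fin.ext (by rw [h]; simp))
    rw [hc]
    simp only
    rw [if_neg (by omega)]
  have hc20 : c2 0 = 1 := by rw [hc2]; simp only; rw [hc0]; norm_num
  have hc2er : ∀ i ∈ Finset.univ.erase (0 : Fin n), c2 i = ε ^ 2 := by
    intro i hi; rw [hc2]; simp only; rw [hcer i hi]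
  have hc30 : c3 0 = 1 := by rw [hc3]; simp only; rw [hc0]; norm_num
  have hc3er : ∀ i ∈ Finset.univ.erase (0 : Fin n), c3 i = ε ^ 3 := by
    intro i hi; rw [hc3]; simp only; rw [hcer i hi]
  have hQx : Qf c x = x 0 ^ 2 + ε * R := hsplit c ε hc0 hcer
  have hTx : T = x 0 ^ 2 + ε ^ 2 * R := by rw [hTd]; exact hsplit c2 (ε^2) hc20 hc2er
  have hUfx : Uf = x 0 ^ 2 + ε ^ 3 * R := by rw [hUfd]; exact hsplit c3 (ε^3) hc30 hc3er
  have hSx : S = 1 + ((n:ℝ) - 1) * ε := by rw [hS]; exact hssplit c ε hc0 hcer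
  have hS2x : S2 = 1 + ((n:ℝ) - 1) * ε ^ 2 := by rw [hS2]; exact hssplit c2 (ε^2) hc20 hc2er
  -- collect powers
  have hM3e : M3 = Qf c x ^ 2 * M7 := by
    rw [hM3d, hM7d, show (-(3/2):ℝ) = ((2:ℕ):ℝ) + -(7/2) by norm_num,
      Real.rpow_add hx0, Real.rpow_natCast]
  have hM5e : M5 = Qf c x * M7 := by
    rw [hM5d, hM7d, show (-(5/2):ℝ) = ((1:ℕ):ℝ) + -(7/2) by norm_num,
      Real.rpow_add hx0, Real.rpow_natCast, pow_one]
  have hM7pos : 0 < M7 := by rw [hM7d]; exact Real.rpow_pos_of_pos hx0 _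
  have hGP : S * (-S * M3 + 3 * T * M5) + S2 * (-2 * M3)
      + T * (3 * S * M5 - 15 * T * M7) + Uf * (12 * M5)
      = ((-(S^2) - 2*S2) * Qf c x ^ 2 + (6*S*T + 12*Uf) * Qf c x - 15*T^2) * M7 := by
    rw [hM3e, hM5e]; ring
  rw [hGP]
  -- final polynomial inequality
  have hm : (2:ℝ) ≤ (n:ℝ) := by exact_mod_cast hn
  have h4 : 4 ≤ ((n:ℝ) + 1) * ε := by
    rw [div_le_iff₀ hn1] at hε₁
    linarith
  have hRnn : 0 ≤ R := by
    rw [hRd]; exact Finset.sum_nonneg fun i _ => sq_nonneg _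
  have hQRnn : 0 ≤ (x 0 ^ 2 + ε * R) * R :=
    mul_nonneg (add_nonneg (sq_nonneg _) (mul_nonneg hε0.le hRnn)) hRnn
  have hA : ((n:ℝ) - 1) * ε * (4 - ((n:ℝ) + 1) * ε) ≤ 0 :=
    mul_nonpos_of_nonneg_of_nonpos (mul_nonneg (by linarith) hε0.le) (by linarith)
  have hB : -(6 * ε * (1 - ε) * (((n:ℝ) + 1) * ε - 2)) ≤ 0 := by
    have : 0 ≤ 6 * ε * (1 - ε) * (((n:ℝ) + 1) * ε - 2) :=
      mul_nonneg (mul_nonneg (by linarith) (by linarith)) (by linarith)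
    linarith
  have hC : -(15 * ε^2 * (1 - ε)^2) ≤ 0 := by
    have : 0 ≤ 15 * ε^2 * (1 - ε)^2 := by positivity
    linarith
  have p1 : ((n:ℝ) - 1) * ε * (4 - ((n:ℝ) + 1) * ε) * (x 0 ^ 2 + ε * R)^2 ≤ 0 :=
    mul_nonpos_of_nonpos_of_nonneg hA (sq_nonneg _)
  have p2 : (-(6 * ε * (1 - ε) * (((n:ℝ) + 1) * ε - 2))) * ((x 0 ^ 2 + ε * R) * R) ≤ 0 :=
    mul_nonpos_of_nonpos_of_nonneg hB hQRnn
  have p3 : (-(15 * ε^2 * (1 - ε)^2)) * R^2 ≤ 0 :=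
    mul_nonpos_of_nonpos_of_nonneg hC (sq_nonneg _)
  have hP : (-(S^2) - 2*S2) * Qf c x ^ 2 + (6*S*T + 12*Uf) * Qf c x - 15*T^2 ≤ 0 := by
    rw [hSx, hS2x, hTx, hQx, hUfx]
    linarith [p1, p2, p3]
  exact mul_nonpos_of_nonpos_of_nonneg hP hM7pos.le

end Main

/-- For `n ≥ 2`, `k = 1` and `4/(n+1) ≤ ε ≤ 1`, the bilaplacian of
`ρ(x) = sqrt(x₁² + ε(x₂² + ⋯ + x_n²))` is nonpositive away from the origin. -/
theorem bilaplacian_nonpos_k_eq_one (n : ℕ) (hn : 2 ≤ n) (ε : ℝ)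
    (hε₁ : 4 / ((n : ℝ) + 1) ≤ ε) (hε₂ : ε ≤ 1)
    (x : EuclideanSpace ℝ (Fin n)) (hx : x ≠ 0) :
    lap (lap (fun y : EuclideanSpace ℝ (Fin n) =>
      Real.sqrt (∑ i : Fin n, (if (i : ℕ) < 1 then (1 : ℝ) else ε) * y i ^ 2))) x ≤ 0 := by
  have hfun : (fun y : EuclideanSpace ℝ (Fin n) =>
      Real.sqrt (∑ i : Fin n, (if (i : ℕ) < 1 then (1 : ℝ) else ε) * y i ^ 2))
      = fun y => Qf (fun i : Fin n => if (i : ℕ) < 1 then (1 : ℝ) else ε) y ^ ((1:ℝ)/2) := by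
    funext y
    rw [Real.sqrt_eq_rpow]
    rfl
  rw [hfun]
  exact bilap_aux n hn ε hε₁ hε₂ _ rfl x hx
end
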